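/- arXiv:1203.2660 — 6 statements merged into one kernel-verified Lean document; each statement's English description precedes it below -/
import Mathlib

section
/- Let n and k be integers with n > 2k ≥ 2. Any resolving set S for the Kneser graph K(n,k) is also a resolving set for the Johnson graph J(n,k); consequently β(J(n,k)) ≤ β(K(n,k)). -/
/-- The Johnson graph `J(n,k)`: vertices are the `k`-element subsets of `{1,...,n}`,
two vertices adjacent iff their intersection has `k-1` elements. -/
def johnsonGraph (n k : ℕ) : SimpleGraph {s : Finset (Fin n) // s.card = k} where
  Adj U W := U ≠ W ∧ (U.1 ∩ W.1).card = k - 1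
  symm := by
    constructor
    intro U W h
    exact ⟨h.1.symm, by rw [Finset.inter_comm]; exact h.2⟩
  loopless := by
    constructor
    intro U h
    exact h.1 rfl

/-- The Kneser graph `K(n,k)`: vertices are the `k`-element subsets of `{1,...,n}`,
two vertices adjacent iff the corresponding subsets are disjoint. -/
def kneserGraph (n k : ℕ) : SimpleGraph {s : Finset (Fin n) // s.card = k} where
  Adj U W := U ≠ W ∧ Disjoint U.1 W.1
  symm := by
    constructor
    intro U W h
    exact ⟨h.1.symm, h.2.symm⟩
  loopless := by
    constructor
    intro U h
    exact h.1 rfl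

/-- A set `S` of vertices is a resolving set for `G` if every pair of distinct
vertices is resolved by some vertex of `S`, i.e. is at different distances from it. -/
def resolvingSet {V : Type*} (G : SimpleGraph V) (S : Set V) : Prop :=
  ∀ u v : V, u ≠ v → ∃ x ∈ S, G.dist u x ≠ G.dist v x

/-- The metric dimension `β(G)`: the minimum cardinality of a resolving set for `G`. -/
noncomputable def metricDim {V : Type*} (G : SimpleGraph V) : ℕ :=
  sInf {m | ∃ S : Finset V, resolvingSet G ↑S ∧ S.card = m}

/-! In `J(n,k)` the distance between `U` and `W` is `k - |U ∩ W|`, so two vertices at equal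
Johnson distance from `X` meet `X` in equally many points. Then a permutation of the ground set
fixing `X` maps one to the other; it induces an automorphism of `K(n,k)`, so they are also at
equal Kneser distance from `X`. For the metric dimension one needs a finite resolving set of
`K(n,k)`: all vertices, since `K(n,k)` is connected for `n > 2k` (two Johnson-adjacent vertices
have a common Kneser neighbour inside the complement of their union). -/

open Finset SimpleGraph

theorem Equiv.Perm.exists_iff_of_card_subtype_eq {α : Type*} [Finite α] {p q : α → Prop}
    [DecidablePred p] [DecidablePred q] (h : Nat.card {a // p a} = Nat.card {a // q a}) :
    ∃ σ : Equiv.Perm α, ∀ a, p a ↔ q (σ a) := by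
  obtain ⟨e⟩ := Finite.card_eq.1 h
  refine ⟨e.extendSubtype, fun a => ?_⟩
  by_cases ha : p a
  · exact iff_of_true ha (e.extendSubtype_mem a ha)
  · exact iff_of_false ha (e.extendSubtype_not_mem a ha)

theorem Finset.natCard_subtype_mem {α : Type*} (r : α → Prop) [DecidablePred r]
    (A : Finset α) : Nat.card {a : {x // r x} // a.1 ∈ A} = #(A.filter r) := by
  rw [← Nat.card_eq_finsetCard,
    Nat.card_congr (Equiv.subtypeSubtypeEquivSubtypeInter r (· ∈ A))]
  exact Nat.card_congr (Equiv.subtypeEquivRight fun x => by simp [and_comm])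

theorem Finset.exists_perm_of_card_inter_eq {α : Type*} [Fintype α] [DecidableEq α]
    {A B X : Finset α} (hAB : #A = #B) (hX : #(A ∩ X) = #(B ∩ X)) :
    ∃ σ : Equiv.Perm α, (∀ a, a ∈ A ↔ σ a ∈ B) ∧ ∀ a, a ∈ X ↔ σ a ∈ X := by
  have hXc : #(A \ X) = #(B \ X) := by
    have := card_inter_add_card_sdiff A X
    have := card_inter_add_card_sdiff B X
    omega
  obtain ⟨σin, hin⟩ := Equiv.Perm.exists_iff_of_card_subtype_eq
    (p := fun a : {x // x ∈ X} => a.1 ∈ A) (q := fun a => a.1 ∈ B)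
    (by simpa only [natCard_subtype_mem, filter_mem_eq_inter] using hX)
  obtain ⟨σout, hout⟩ := Equiv.Perm.exists_iff_of_card_subtype_eq
    (p := fun a : {x // x ∉ X} => a.1 ∈ A) (q := fun a => a.1 ∈ B)
    (by simpa only [natCard_subtype_mem, filter_notMem_eq_sdiff] using hXc)
  refine ⟨σin.subtypeCongr σout, fun a => ?_, fun a => ?_⟩ <;> by_cases ha : a ∈ X
  · simpa only [Equiv.Perm.subtypeCongr.left_apply _ _ ha] using hin ⟨a, ha⟩
  · simpa only [Equiv.Perm.subtypeCongr.right_apply _ _ ha] using hout ⟨a, ha⟩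
  · simpa only [Equiv.Perm.subtypeCongr.left_apply _ _ ha] using iff_of_true ha (σin _).2
  · simpa only [Equiv.Perm.subtypeCongr.right_apply _ _ ha] using iff_of_false ha (σout _).2

theorem Finset.card_inter_lt_of_ne {α : Type*} [DecidableEq α] {k : ℕ} {s t : Finset α}
    (hs : #s = k) (ht : #t = k) (h : s ≠ t) : #(s ∩ t) < k := by
  refine ((card_le_card inter_subset_left).trans hs.le).lt_of_ne fun heq => h ?_
  have hs' : s ∩ t = s := eq_of_subset_of_card_le inter_subset_left (by rw [heq, hs])
  have ht' : s ∩ t = t := eq_of_subset_of_card_le inter_subset_right (by rw [heq, ht])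
  exact hs'.symm.trans ht'

section Graphs

variable {V : Type*} {G H : SimpleGraph V}

theorem SimpleGraph.Hom.edist_map_le {W : Type*} {G' : SimpleGraph W} (f : G →g G')
    (u v : V) : G'.edist (f u) (f v) ≤ G.edist u v :=
  le_iInf fun p => (edist_le (p.map f)).trans_eq (by simp)

theorem SimpleGraph.Reachable.of_adj_imp_reachable
    (h : ∀ ⦃u v⦄, G.Adj u v → H.Reachable u v) {u v : V} (hr : G.Reachable u v) : H.Reachable u v := by
  obtain ⟨p⟩ := hr
  induction p with
  | nil => rfl
  | cons hadj _ ih => exact (h hadj).trans ih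

theorem resolvingSet.of_dist_eq_imp {S : Set V}
    (h : ∀ u v x, H.dist u x = H.dist v x → G.dist u x = G.dist v x) (hS : resolvingSet G S) :
    resolvingSet H S := fun u v huv =>
  let ⟨x, hx, hGx⟩ := hS u v huv
  ⟨x, hx, mt (h u v x) hGx⟩

theorem resolvingSet_univ_of_preconnected (hG : G.Preconnected) : resolvingSet G Set.univ :=
  fun u v huv => ⟨u, trivial, by rw [dist_self]; exact ((hG v u).pos_dist_of_ne huv.symm).ne⟩

theorem metricDim_le_of_resolvingSet_imp (hG : ∃ S : Finset V, resolvingSet G S)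
    (h : ∀ S, resolvingSet G S → resolvingSet H S) : metricDim H ≤ metricDim G := by
  obtain ⟨S, hS, hcard⟩ :=
    Nat.sInf_mem (s := {m | ∃ S : Finset V, resolvingSet G ↑S ∧ #S = m})
      (let ⟨S, hS⟩ := hG; ⟨_, S, hS, rfl⟩)
  exact Nat.sInf_le ⟨S, h _ hS, hcard⟩

end Graphs

section Johnson

variable {n k : ℕ} {u v x : {s : Finset (Fin n) // s.card = k}}

theorem exists_johnsonGraph_adj_card_inter_succ (h : u ≠ v) :
    ∃ w, (johnsonGraph n k).Adj u w ∧ #(w.1 ∩ v.1) = #(u.1 ∩ v.1) + 1 := by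
  have hlt := card_inter_lt_of_ne u.2 v.2 (Subtype.coe_ne_coe.2 h)
  have hu := card_inter_add_card_sdiff u.1 v.1
  have hv := card_inter_add_card_sdiff v.1 u.1
  rw [u.2] at hu
  rw [v.2, inter_comm] at hv
  obtain ⟨a, ha⟩ : (u.1 \ v.1).Nonempty := card_pos.1 (by omega)
  obtain ⟨b, hb⟩ : (v.1 \ u.1).Nonempty := card_pos.1 (by omega)
  rw [mem_sdiff] at ha hb
  have hb' : b ∉ u.1.erase a := fun hb' => hb.2 (mem_of_mem_erase hb')
  refine ⟨⟨insert b (u.1.erase a), ?_⟩, ⟨?_, ?_⟩, ?_⟩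
  · rw [card_insert_of_notMem hb', card_erase_of_mem ha.1, u.2]
    omega
  · exact fun he => hb.2 (by rw [he]; exact mem_insert_self b _)
  · have : u.1 ∩ insert b (u.1.erase a) = u.1.erase a := by grind
    rw [this, card_erase_of_mem ha.1, u.2]
  · have : insert b (u.1.erase a) ∩ v.1 = insert b (u.1 ∩ v.1) := by grind
    rw [this, card_insert_of_notMem (by grind)]

theorem johnsonGraph_exists_walk (u v : {s : Finset (Fin n) // s.card = k}) :
    ∃ p : (johnsonGraph n k).Walk u v, p.length = k - #(u.1 ∩ v.1) := by
  induction hm : k - #(u.1 ∩ v.1) generalizing u with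
  | zero =>
    obtain rfl : u = v := by
      by_contra h
      have := card_inter_lt_of_ne u.2 v.2 (Subtype.coe_ne_coe.2 h)
      omega
    exact ⟨.nil, rfl⟩
  | succ m ih =>
    obtain ⟨w, hadj, hw⟩ := exists_johnsonGraph_adj_card_inter_succ (u := u) (v := v)
      (by rintro rfl; simp [u.2] at hm)
    obtain ⟨p, hp⟩ := ih w (by omega)
    exact ⟨.cons hadj p, by simp [hp]⟩

theorem card_inter_le_succ_of_johnsonGraph_adj (h : (johnsonGraph n k).Adj u v)
    (X : Finset (Fin n)) : #(v.1 ∩ X) ≤ #(u.1 ∩ X) + 1 := by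
  have hsub : v.1 ∩ X ⊆ (u.1 ∩ X) ∪ (v.1 \ u.1) := by grind
  have hvu := card_inter_add_card_sdiff v.1 u.1
  rw [inter_comm, h.2, v.2] at hvu
  have := (card_le_card hsub).trans (card_union_le _ _)
  omega

theorem johnsonGraph_le_length_walk (p : (johnsonGraph n k).Walk u v) :
    k - #(u.1 ∩ v.1) ≤ p.length := by
  induction p with
  | @nil w => simp [w.2]
  | @cons _ _ w h _ ih =>
    have := card_inter_le_succ_of_johnsonGraph_adj h w.1
    simp only [Walk.length_cons]
    omega

theorem johnsonGraph_dist (u v : {s : Finset (Fin n) // s.card = k}) :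
    (johnsonGraph n k).dist u v = k - #(u.1 ∩ v.1) := by
  obtain ⟨p, hp⟩ := johnsonGraph_exists_walk u v
  obtain ⟨q, hq⟩ := Reachable.exists_walk_length_eq_dist ⟨p⟩
  exact le_antisymm (hp ▸ dist_le p) (hq ▸ johnsonGraph_le_length_walk q)

theorem card_inter_eq_of_johnsonGraph_dist_eq
    (h : (johnsonGraph n k).dist u x = (johnsonGraph n k).dist v x) :
    #(u.1 ∩ x.1) = #(v.1 ∩ x.1) := by
  rw [johnsonGraph_dist, johnsonGraph_dist] at h
  have hu := (card_le_card (inter_subset_left (s₁ := u.1) (s₂ := x.1))).trans u.2.le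
  have hv := (card_le_card (inter_subset_left (s₁ := v.1) (s₂ := x.1))).trans v.2.le
  omega

end Johnson

section Kneser

variable {n k : ℕ} {u v x : {s : Finset (Fin n) // s.card = k}}

def kneserGraphMap {m : ℕ} (f : Fin n ↪ Fin m) : kneserGraph n k →g kneserGraph m k where
  toFun u := ⟨u.1.map f, by rw [card_map, u.2]⟩
  map_rel' h := ⟨fun he => h.1 (Subtype.ext (map_injective f (congrArg Subtype.val he))),
    (disjoint_map f).2 h.2⟩

theorem kneserGraph_edist_le_of_card_inter_eq (h : #(u.1 ∩ x.1) = #(v.1 ∩ x.1)) :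
    (kneserGraph n k).edist v x ≤ (kneserGraph n k).edist u x := by
  obtain ⟨σ, hσu, hσx⟩ := exists_perm_of_card_inter_eq (u.2.trans v.2.symm) h
  have hmap {A B : Finset (Fin n)} (hAB : ∀ a, a ∈ A ↔ σ a ∈ B) :
      A.map σ.toEmbedding = B := by
    ext b
    simpa using hAB (σ.symm b)
  have hu : kneserGraphMap σ.toEmbedding u = v := Subtype.ext (hmap hσu)
  have hx : kneserGraphMap σ.toEmbedding x = x := Subtype.ext (hmap hσx)
  simpa only [hu, hx] using (kneserGraphMap σ.toEmbedding).edist_map_le u x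

theorem kneserGraph_dist_eq_of_card_inter_eq (h : #(u.1 ∩ x.1) = #(v.1 ∩ x.1)) :
    (kneserGraph n k).dist u x = (kneserGraph n k).dist v x :=
  congrArg ENat.toNat <| le_antisymm (kneserGraph_edist_le_of_card_inter_eq h.symm)
    (kneserGraph_edist_le_of_card_inter_eq h)

theorem kneserGraph_adj_of_disjoint (hk : k ≠ 0) (h : Disjoint u.1 v.1) :
    (kneserGraph n k).Adj u v := by
  refine ⟨fun he => hk ?_, h⟩
  rw [he, disjoint_self_iff_empty] at h
  rw [← v.2, h, card_empty]

theorem kneserGraph_reachable_of_johnsonGraph_adj (hn : 2 * k < n)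
    (h : (johnsonGraph n k).Adj u v) : (kneserGraph n k).Reachable u v := by
  have hk : k ≠ 0 := by
    rintro rfl
    exact h.1 (Subtype.ext ((card_eq_zero.1 u.2).trans (card_eq_zero.1 v.2).symm))
  have hunion : #(u.1 ∪ v.1) = k + 1 := by
    have := card_union_add_card_inter u.1 v.1
    rw [u.2, v.2, h.2] at this
    omega
  obtain ⟨t, ht, htk⟩ := exists_subset_card_eq (s := (u.1 ∪ v.1)ᶜ) (n := k)
    (by rw [card_compl, Fintype.card_fin, hunion]; omega)
  have hdisj := disjoint_union_left.1 (disjoint_of_subset_right ht disjoint_compl_right)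
  let y : {s : Finset (Fin n) // s.card = k} := ⟨t, htk⟩
  have huy : (kneserGraph n k).Adj u y := kneserGraph_adj_of_disjoint hk hdisj.1
  have hvy : (kneserGraph n k).Adj v y := kneserGraph_adj_of_disjoint hk hdisj.2
  exact huy.reachable.trans hvy.reachable.symm

theorem kneserGraph_preconnected (hn : 2 * k < n) : (kneserGraph n k).Preconnected :=
  fun u v => Reachable.of_adj_imp_reachable
    (fun _ _ => kneserGraph_reachable_of_johnsonGraph_adj hn)
    ⟨(johnsonGraph_exists_walk u v).choose⟩

end Kneser

theorem kneser_resolving_implies_johnson_general (n k : ℕ) (hn : 2 * k < n) :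
    (∀ S : Set {s : Finset (Fin n) // s.card = k},
      resolvingSet (kneserGraph n k) S → resolvingSet (johnsonGraph n k) S) ∧
    metricDim (johnsonGraph n k) ≤ metricDim (kneserGraph n k) := by
  have hres : ∀ S : Set {s : Finset (Fin n) // s.card = k},
      resolvingSet (kneserGraph n k) S → resolvingSet (johnsonGraph n k) S := fun _ =>
    resolvingSet.of_dist_eq_imp fun _ _ _ h =>
      kneserGraph_dist_eq_of_card_inter_eq (card_inter_eq_of_johnsonGraph_dist_eq h)
  refine ⟨hres, metricDim_le_of_resolvingSet_imp ⟨univ, ?_⟩ hres⟩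
  simpa using resolvingSet_univ_of_preconnected (kneserGraph_preconnected hn)

/-- For `n > 2k ≥ 2`, any resolving set for the Kneser graph `K(n,k)` is also a
resolving set for the Johnson graph `J(n,k)`; consequently `β(J(n,k)) ≤ β(K(n,k))`. -/
theorem kneser_resolving_implies_johnson (n k : ℕ) (hk : 2 ≤ 2 * k) (hn : 2 * k < n) :
    (∀ S : Set {s : Finset (Fin n) // s.card = k},
      resolvingSet (kneserGraph n k) S → resolvingSet (johnsonGraph n k) S) ∧
    metricDim (johnsonGraph n k) ≤ metricDim (kneserGraph n k) :=
  kneser_resolving_implies_johnson_general n k hn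
end

section
/- Let k ≥ 2 be an integer. Any resolving set for the Johnson graph J(2k+1,k) is also a resolving set for the Odd graph O_{k+1} = K(2k+1,k); consequently β(J(2k+1,k)) = β(K(2k+1,k)). -/
open Finset SimpleGraph

section Metric

variable {V : Type*} {G H : SimpleGraph V}

theorem SimpleGraph.Walk.le_length_add_of_adj {f : V → ℕ}
    (hf : ∀ u v, G.Adj u v → f u ≤ f v + 1) {u v : V} (p : G.Walk u v) :
    f u ≤ p.length + f v := by
  induction p with
  | nil => simp
  | cons hadj _ ih =>
    have := hf _ _ hadj
    rw [Walk.length_cons]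
    omega

theorem SimpleGraph.Reachable.le_dist_add_of_adj {f : V → ℕ}
    (hf : ∀ u v, G.Adj u v → f u ≤ f v + 1) {u v : V} (h : G.Reachable u v) :
    f u ≤ G.dist u v + f v := by
  obtain ⟨p, hp⟩ := h.exists_walk_length_eq_dist
  exact hp ▸ p.le_length_add_of_adj hf

theorem SimpleGraph.Walk.exists_walk_length_le_mul {c : ℕ}
    (h : ∀ u v, G.Adj u v → ∃ q : H.Walk u v, q.length ≤ c) {u v : V} (p : G.Walk u v) :
    ∃ q : H.Walk u v, q.length ≤ c * p.length := by
  induction p with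
  | nil => exact ⟨.nil, by simp⟩
  | cons hadj _ ih =>
    obtain ⟨q₁, hq₁⟩ := h _ _ hadj
    obtain ⟨q₂, hq₂⟩ := ih
    refine ⟨q₁.append q₂, ?_⟩
    rw [Walk.length_append, Walk.length_cons, mul_add_one]
    omega

theorem resolvingSet_iff_of_dist_eq_iff
    (h : ∀ u v x, G.dist u x = G.dist v x ↔ H.dist u x = H.dist v x) (S : Set V) :
    resolvingSet G S ↔ resolvingSet H S := by
  simp only [resolvingSet, ne_eq, h]

theorem metricDim_eq_of_dist_eq_iff
    (h : ∀ u v x, G.dist u x = G.dist v x ↔ H.dist u x = H.dist v x) :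
    metricDim G = metricDim H := by
  simp only [metricDim, resolvingSet_iff_of_dist_eq_iff h]

end Metric

abbrev KSubset (n k : ℕ) := {s : Finset (Fin n) // #s = k}

namespace KSubset

variable {n k : ℕ}

theorem card_inter_le (U W : KSubset n k) : #(U.1 ∩ W.1) ≤ k :=
  (card_le_card inter_subset_left).trans_eq U.2

theorem eq_of_le_card_inter {U W : KSubset n k} (h : k ≤ #(U.1 ∩ W.1)) : U = W := by
  have hUW : U.1 ⊆ W.1 :=
    inter_eq_left.1 (eq_of_subset_of_card_le inter_subset_left (by rwa [U.2]))
  exact Subtype.ext (eq_of_subset_of_card_le hUW (by rw [U.2, W.2]))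

theorem exists_mem_notMem_of_card_inter_lt {U W : KSubset n k} (h : #(U.1 ∩ W.1) < k) :
    ∃ a ∈ U.1, a ∉ W.1 := by
  have := card_sdiff_add_card_inter U.1 W.1
  obtain ⟨a, ha⟩ : (U.1 \ W.1).Nonempty := card_pos.1 (by omega)
  exact ⟨a, mem_sdiff.1 ha⟩

theorem exists_johnsonGraph_adj_card_inter_eq_succ {U W : KSubset n k}
    (h : #(U.1 ∩ W.1) < k) :
    ∃ U', (johnsonGraph n k).Adj U U' ∧ #(U'.1 ∩ W.1) = #(U.1 ∩ W.1) + 1 := by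
  obtain ⟨a, haU, haW⟩ := exists_mem_notMem_of_card_inter_lt h
  obtain ⟨b, hbW, hbU⟩ := exists_mem_notMem_of_card_inter_lt (U := W) (W := U)
    (by rwa [inter_comm])
  have hb : b ∉ U.1.erase a := fun hb ↦ hbU (mem_of_mem_erase hb)
  refine ⟨⟨insert b (U.1.erase a), by rw [card_insert_of_notMem hb, card_erase_add_one haU, U.2]⟩,
    ⟨fun hU ↦ ne_of_mem_of_not_mem' haU ?_ (congrArg Subtype.val hU), ?_⟩, ?_⟩
  · exact mem_insert.not.2 (not_or.2 ⟨fun hab ↦ hbU (hab ▸ haU), notMem_erase a _⟩)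
  · rw [inter_insert_of_notMem hbU, inter_eq_right.2 (erase_subset a U.1),
      card_erase_of_mem haU, U.2]
  · rw [insert_inter_of_mem hbW, erase_inter, erase_eq_of_notMem (fun h ↦ haW (mem_inter.1 h).2),
      card_insert_of_notMem (fun h ↦ hbU (mem_inter.1 h).1)]

end KSubset

open KSubset

section

variable {n k : ℕ}

theorem exists_johnsonGraph_walk_length_eq (U W : KSubset n k) :
    ∃ p : (johnsonGraph n k).Walk U W, p.length = k - #(U.1 ∩ W.1) := by
  induction hd : k - #(U.1 ∩ W.1) generalizing U with
  | zero =>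
    obtain rfl := eq_of_le_card_inter (U := U) (W := W) (by omega)
    exact ⟨.nil, rfl⟩
  | succ d ih =>
    obtain ⟨U', hadj, hU'⟩ :=
      exists_johnsonGraph_adj_card_inter_eq_succ (U := U) (W := W) (by omega)
    obtain ⟨p, hp⟩ := ih U' (by omega)
    exact ⟨.cons hadj p, by rw [Walk.length_cons, hp]⟩

theorem card_inter_le_card_inter_add_one_of_johnsonGraph_adj {U U' : KSubset n k}
    (h : (johnsonGraph n k).Adj U U') (W : KSubset n k) :
    #(U.1 ∩ W.1) ≤ #(U'.1 ∩ W.1) + 1 :=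
  calc #(U.1 ∩ W.1) ≤ #((U'.1 ∩ W.1) ∪ (U.1 \ U'.1)) :=
        card_le_card fun x ↦ by simp only [mem_inter, mem_union, mem_sdiff]; tauto
    _ ≤ #(U'.1 ∩ W.1) + #(U.1 \ U'.1) := card_union_le _ _
    _ ≤ #(U'.1 ∩ W.1) + 1 := by
        rw [card_sdiff, inter_comm U'.1 U.1, h.2, U.2]
        omega

theorem johnsonGraph_dist_s3 (U W : KSubset n k) :
    (johnsonGraph n k).dist U W = k - #(U.1 ∩ W.1) := by
  obtain ⟨p, hp⟩ := exists_johnsonGraph_walk_length_eq U W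
  refine le_antisymm (hp ▸ dist_le p) ?_
  have := Reachable.le_dist_add_of_adj (f := fun V : KSubset n k ↦ k - #(V.1 ∩ W.1))
    (fun V V' h ↦ by
      have := card_inter_le_card_inter_add_one_of_johnsonGraph_adj h.symm W
      omega) ⟨p⟩
  simpa [W.2] using this

theorem kneserGraph_adj_of_disjoint_s3 (hk : 1 ≤ k) {U W : KSubset n k} (h : Disjoint U.1 W.1) :
    (kneserGraph n k).Adj U W := by
  refine ⟨fun hUW ↦ ?_, h⟩
  subst hUW
  have := U.2
  rw [disjoint_self.1 h, bot_eq_empty, card_empty] at this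
  omega

theorem exists_kneserGraph_walk_of_johnsonGraph_adj (hk : 1 ≤ k) {U U' : KSubset (2 * k + 1) k}
    (h : (johnsonGraph (2 * k + 1) k).Adj U U') :
    ∃ q : (kneserGraph (2 * k + 1) k).Walk U U', q.length ≤ 2 := by
  have hunion := card_union_add_card_inter U.1 U'.1
  rw [U.2, U'.2, h.2] at hunion
  obtain ⟨B, hB, hBk⟩ := exists_subset_card_eq (s := (U.1 ∪ U'.1)ᶜ) (n := k)
    (by rw [card_compl, Fintype.card_fin]; omega)
  rw [subset_compl_iff_disjoint_right, disjoint_union_right] at hB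
  exact ⟨.cons (kneserGraph_adj_of_disjoint_s3 (W := ⟨B, hBk⟩) hk hB.1.symm)
    (.cons (kneserGraph_adj_of_disjoint_s3 hk hB.2) .nil), le_rfl⟩

theorem exists_kneserGraph_walk_length_le_two_mul (hk : 1 ≤ k) (U W : KSubset (2 * k + 1) k) :
    ∃ q : (kneserGraph (2 * k + 1) k).Walk U W, q.length ≤ 2 * (k - #(U.1 ∩ W.1)) := by
  obtain ⟨p, hp⟩ := exists_johnsonGraph_walk_length_eq U W
  exact hp ▸ p.exists_walk_length_le_mul fun _ _ h ↦
    exists_kneserGraph_walk_of_johnsonGraph_adj hk h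

theorem exists_kneserGraph_walk_length_le_two_mul_add_one (hk : 1 ≤ k)
    (U W : KSubset (2 * k + 1) k) :
    ∃ q : (kneserGraph (2 * k + 1) k).Walk U W, q.length ≤ 2 * #(U.1 ∩ W.1) + 1 := by
  have hUW := card_sdiff_add_card_inter U.1 W.1
  rw [U.2] at hUW
  obtain ⟨W', hUW', hW'W, hW'⟩ :=
    exists_subsuperset_card_eq (s := U.1 \ W.1) (t := W.1ᶜ) (n := k)
    (fun x hx ↦ mem_compl.2 (mem_sdiff.1 hx).2) (by omega)
    (by rw [card_compl, Fintype.card_fin, W.2]; omega)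
  obtain ⟨q, hq⟩ := exists_kneserGraph_walk_length_le_two_mul hk U ⟨W', hW'⟩
  dsimp only at hq
  have : #(U.1 \ W.1) ≤ #(U.1 ∩ W') := card_le_card (subset_inter sdiff_subset hUW')
  refine ⟨q.concat (kneserGraph_adj_of_disjoint_s3 (U := ⟨W', hW'⟩) hk
    (subset_compl_iff_disjoint_right.1 hW'W)), ?_⟩
  rw [Walk.length_concat]
  omega

theorem card_inter_add_card_inter_bounds_of_kneserGraph_adj {U U' : KSubset (2 * k + 1) k}
    (h : (kneserGraph (2 * k + 1) k).Adj U U') (W : KSubset (2 * k + 1) k) :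
    k ≤ #(U.1 ∩ W.1) + #(U'.1 ∩ W.1) + 1 ∧ #(U.1 ∩ W.1) + #(U'.1 ∩ W.1) ≤ k := by
  have hsum : #((U.1 ∩ W.1) ∪ (U'.1 ∩ W.1)) = #(U.1 ∩ W.1) + #(U'.1 ∩ W.1) :=
    card_union_of_disjoint (h.2.mono inter_subset_left inter_subset_left)
  have hcompl : #(U.1 ∪ U'.1)ᶜ = 1 := by
    rw [card_compl, Fintype.card_fin, card_union_of_disjoint h.2, U.2, U'.2]
    omega
  constructor
  · calc k = #W.1 := W.2.symm
      _ ≤ #((U.1 ∩ W.1) ∪ (U'.1 ∩ W.1) ∪ (U.1 ∪ U'.1)ᶜ) :=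
          card_le_card fun x ↦ by simp only [mem_union, mem_inter, mem_compl]; tauto
      _ ≤ #((U.1 ∩ W.1) ∪ (U'.1 ∩ W.1)) + #(U.1 ∪ U'.1)ᶜ := card_union_le _ _
      _ = _ := by rw [hsum, hcompl]
  · rw [← hsum]
    exact (card_le_card (union_subset inter_subset_right inter_subset_right)).trans_eq W.2

theorem kneserGraph_dist (hk : 1 ≤ k) (U W : KSubset (2 * k + 1) k) :
    (kneserGraph (2 * k + 1) k).dist U W =
      min (2 * (k - #(U.1 ∩ W.1))) (2 * #(U.1 ∩ W.1) + 1) := by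
  obtain ⟨p, hp⟩ := exists_kneserGraph_walk_length_le_two_mul hk U W
  obtain ⟨q, hq⟩ := exists_kneserGraph_walk_length_le_two_mul_add_one hk U W
  refine le_antisymm (le_min ((dist_le p).trans hp) ((dist_le q).trans hq)) ?_
  have := Reachable.le_dist_add_of_adj
    (f := fun V : KSubset (2 * k + 1) k ↦ min (2 * (k - #(V.1 ∩ W.1))) (2 * #(V.1 ∩ W.1) + 1))
    (fun V V' h ↦ by
      have := card_inter_add_card_inter_bounds_of_kneserGraph_adj h W
      have := card_inter_le V W
      have := card_inter_le V' W
      omega) ⟨p⟩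
  simpa [W.2] using this

theorem johnsonGraph_dist_eq_iff_kneserGraph_dist_eq (hk : 1 ≤ k)
    (U V X : KSubset (2 * k + 1) k) :
    (johnsonGraph (2 * k + 1) k).dist U X = (johnsonGraph (2 * k + 1) k).dist V X ↔
      (kneserGraph (2 * k + 1) k).dist U X = (kneserGraph (2 * k + 1) k).dist V X := by
  rw [johnsonGraph_dist_s3, johnsonGraph_dist_s3, kneserGraph_dist hk, kneserGraph_dist hk]
  have := card_inter_le U X
  have := card_inter_le V X
  omega

end

/-- For `k ≥ 2`, any resolving set for the Johnson graph `J(2k+1,k)` is also a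
resolving set for the Odd graph `O_{k+1} = K(2k+1,k)`; consequently
`β(J(2k+1,k)) = β(K(2k+1,k))`. -/
theorem johnson_resolving_implies_odd (k : ℕ) (hk : 2 ≤ k) :
    (∀ S : Set {s : Finset (Fin (2 * k + 1)) // s.card = k},
      resolvingSet (johnsonGraph (2 * k + 1) k) S →
        resolvingSet (kneserGraph (2 * k + 1) k) S) ∧
    metricDim (johnsonGraph (2 * k + 1) k) = metricDim (kneserGraph (2 * k + 1) k) := by
  have h := johnsonGraph_dist_eq_iff_kneserGraph_dist_eq (k := k) (by omega)
  exact ⟨fun S ↦ (resolvingSet_iff_of_dist_eq_iff h S).1, metricDim_eq_of_dist_eq_iff h⟩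
end

section
/- Let n and k be integers with 1 ≤ k < n, and let S = {S_1, ..., S_t} be a family of k-element subsets of {1,...,n} whose incidence matrix (the t×n real matrix whose i-th row is the 0-1 indicator vector of S_i) has rank n over the reals. Then S is a resolving set for the Johnson graph J(n,k). -/
open Finset SimpleGraph Matrix

namespace Finset

variable {α : Type*} [DecidableEq α]

def incidenceVector (R : Type*) [Zero R] [One R] (s : Finset α) : α → R :=
  fun j => if j ∈ s then 1 else 0

theorem incidenceVector_injective (R : Type*) [Zero R] [One R] [NeZero (1 : R)] :
    Function.Injective (incidenceVector (α := α) R) := by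
  intro s t hst
  ext j
  have hj := congr_fun hst j
  by_cases hs : j ∈ s <;> by_cases ht : j ∈ t <;> simp_all [incidenceVector]

theorem incidenceVector_dotProduct_incidenceVector [Fintype α] (R : Type*) [NonAssocSemiring R]
    (s t : Finset α) : s.incidenceVector R ⬝ᵥ t.incidenceVector R = #(s ∩ t) := by
  simp only [dotProduct, incidenceVector, ite_zero_mul_ite_zero, mul_one, ← mem_inter]
  rw [sum_boole, filter_mem_eq_inter, univ_inter]

end Finset

theorem Matrix.mulVec_injective_of_rank_eq_card {m n K : Type*} [Fintype m] [Fintype n] [Field K]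
    {A : Matrix m n K} (hA : A.rank = Fintype.card n) : Function.Injective A.mulVec :=
  mulVec_injective_iff.2 <| linearIndependent_iff_card_eq_finrank_span.2 <| by
    rw [← hA, rank_eq_finrank_span_cols]
    rfl

namespace johnsonGraph

variable {n k : ℕ}

theorem adj_iff_card_sdiff_eq_one {U V : {s : Finset (Fin n) // s.card = k}} :
    (johnsonGraph n k).Adj U V ↔ #(U.1 \ V.1) = 1 := by
  have hUV := card_sdiff_add_card_inter U.1 V.1
  rw [U.2] at hUV
  refine ⟨fun ⟨hne, hcard⟩ => ?_, fun h => ⟨fun hUV' => ?_, by omega⟩⟩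
  · rcases Nat.eq_zero_or_pos k with rfl | hk
    · exact absurd (Subtype.ext (by rw [card_eq_zero.1 U.2, card_eq_zero.1 V.2])) hne
    · omega
  · simp [hUV'] at h

theorem card_sdiff_le_length {U W : {s : Finset (Fin n) // s.card = k}}
    (p : (johnsonGraph n k).Walk U W) : #(U.1 \ W.1) ≤ p.length := by
  induction p with
  | nil => simp
  | @cons U V W hUV p ih =>
    have hstep : U.1 \ W.1 ⊆ (V.1 \ W.1) ∪ (U.1 \ V.1) := by
      intro x hx
      by_cases hxV : x ∈ V.1 <;> simp_all
    have := (card_le_card hstep).trans (card_union_le _ _)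
    rw [adj_iff_card_sdiff_eq_one.1 hUV] at this
    simp only [Walk.length_cons]
    omega

theorem exists_walk_length_eq_card_sdiff (U W : {s : Finset (Fin n) // s.card = k}) :
    ∃ p : (johnsonGraph n k).Walk U W, p.length = #(U.1 \ W.1) := by
  induction hd : #(U.1 \ W.1) generalizing U with
  | zero =>
    obtain rfl : U = W := Subtype.ext <| eq_of_subset_of_card_le (sdiff_eq_empty_iff_subset.1 <|
      card_eq_zero.1 hd) (by rw [U.2, W.2])
    exact ⟨Walk.nil, rfl⟩
  | succ d ih =>
    obtain ⟨a, ha⟩ : (U.1 \ W.1).Nonempty := card_pos.1 (by omega)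
    obtain ⟨b, hb⟩ : (W.1 \ U.1).Nonempty :=
      card_pos.1 (by rw [← card_sdiff_comm (U.2.trans W.2.symm)]; omega)
    rw [mem_sdiff] at ha hb
    let U' : {s : Finset (Fin n) // s.card = k} := ⟨insert b (U.1.erase a), by
      rw [card_insert_of_notMem (fun h => hb.2 (mem_of_mem_erase h)), card_erase_of_mem ha.1, U.2]
      have := card_pos.2 ⟨a, ha.1⟩
      rw [U.2] at this
      omega⟩
    have hUU' : (johnsonGraph n k).Adj U U' := by
      rw [adj_iff_card_sdiff_eq_one, card_eq_one]
      refine ⟨a, ?_⟩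
      ext x
      by_cases hxa : x = a <;> by_cases hxb : x = b <;> aesop
    have hU'W : #(U'.1 \ W.1) = d := by
      have : U'.1 \ W.1 = (U.1 \ W.1).erase a := by
        rw [insert_sdiff_of_mem _ hb.1, erase_sdiff_comm]
      rw [this, card_erase_of_mem (mem_sdiff.2 ha), hd, Nat.add_sub_cancel]
    obtain ⟨p, hp⟩ := ih U' hU'W
    exact ⟨Walk.cons hUU' p, by rw [Walk.length_cons, hp]⟩

theorem dist_eq_card_sdiff (U W : {s : Finset (Fin n) // s.card = k}) :
    (johnsonGraph n k).dist U W = #(U.1 \ W.1) := by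
  obtain ⟨p, hp⟩ := exists_walk_length_eq_card_sdiff U W
  obtain ⟨q, hq⟩ := (Walk.reachable p).exists_walk_length_eq_dist
  exact le_antisymm (hp ▸ dist_le p) (hq ▸ card_sdiff_le_length q)

theorem card_inter_eq_of_dist_eq {U W X : {s : Finset (Fin n) // s.card = k}}
    (h : (johnsonGraph n k).dist U X = (johnsonGraph n k).dist W X) :
    #(U.1 ∩ X.1) = #(W.1 ∩ X.1) := by
  have hU := card_sdiff_add_card_inter U.1 X.1
  have hW := card_sdiff_add_card_inter W.1 X.1
  rw [dist_eq_card_sdiff, dist_eq_card_sdiff] at h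
  rw [U.2] at hU
  rw [W.2] at hW
  omega

end johnsonGraph

theorem johnson_resolving_of_rank_general (n k t : ℕ)
    (f : Fin t → {s : Finset (Fin n) // s.card = k})
    (A : Matrix (Fin t) (Fin n) ℝ)
    (hA : ∀ i j, A i j = if j ∈ (f i).1 then 1 else 0)
    (hrank : A.rank = n) :
    resolvingSet (johnsonGraph n k) (Set.range f) := by
  intro u v huv
  by_contra! hdist
  have hrow : ∀ i, A i = (f i).1.incidenceVector ℝ := fun i => funext (hA i)
  have hmulVec : A *ᵥ u.1.incidenceVector ℝ = A *ᵥ v.1.incidenceVector ℝ := by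
    funext i
    simp only [mulVec, hrow, incidenceVector_dotProduct_incidenceVector, inter_comm (f i).1]
    rw [johnsonGraph.card_inter_eq_of_dist_eq (hdist _ ⟨i, rfl⟩)]
  have hinj := Matrix.mulVec_injective_of_rank_eq_card (hrank.trans (Fintype.card_fin n).symm)
  exact huv (Subtype.ext (incidenceVector_injective ℝ (hinj hmulVec)))

/-- If `S = {S_1,...,S_t}` is a family of `k`-subsets of `{1,...,n}` whose incidence
matrix has rank `n` over the reals, then `S` is a resolving set for `J(n,k)`. -/
theorem johnson_resolving_of_rank (n k t : ℕ) (hk : 1 ≤ k) (hkn : k < n)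
    (f : Fin t → {s : Finset (Fin n) // s.card = k})
    (A : Matrix (Fin t) (Fin n) ℝ)
    (hA : ∀ i j, A i j = if j ∈ (f i).1 then 1 else 0)
    (hrank : A.rank = n) :
    resolvingSet (johnsonGraph n k) (Set.range f) :=
  johnson_resolving_of_rank_general n k t f A hA hrank
end

section
/- For any integers n and k with 1 ≤ k < n, the metric dimension of the Johnson graph J(n,k) satisfies β(J(n,k)) ≤ n. -/
/-!
In `J(n,k)` the number `|U \ W|` changes by at most one along an edge and can always be lowered
by one by an exchange, so `d(U,W) = |U \ W| = k - |U ∩ W|`. Hence a family of vertices resolves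
`J(n,k)` as soon as the sizes `|U ∩ X|` with its members `X` determine the `k`-set `U`.
Fix a `(k-1)`-set `T` and a pair `Z` disjoint from it, and take the `n` probes `T ∪ {i}`
(`i ∉ T`) and `Z ∪ T \ {t}` (`t ∈ T`). The first kind gives `|U ∩ T| + [i ∈ U]`; since `U ⊄ T`
this forces `|U ∩ T|` and then `U \ T`, after which the second kind reveals `U ∩ T`.
-/

namespace SimpleGraph

variable {V : Type*} {G : SimpleGraph V}

theorem le_add_length_of_adj_le_succ (f : V → ℕ) (hf : ∀ u v, G.Adj u v → f u ≤ f v + 1)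
    {u w : V} (p : G.Walk u w) : f u ≤ f w + p.length := by
  induction p with
  | nil => simp
  | cons h _ ih => rw [Walk.length_cons]; have := hf _ _ h; omega

theorem exists_walk_length_le_of_exists_adj_lt (f : V → ℕ) {w : V}
    (hf : ∀ u, u ≠ w → ∃ v, G.Adj u v ∧ f v < f u) (u : V) :
    ∃ p : G.Walk u w, p.length ≤ f u := by
  induction h : f u using Nat.strong_induction_on generalizing u with
  | _ m ih =>
    by_cases huw : u = w
    · subst huw
      exact ⟨.nil, by simp⟩
    · obtain ⟨v, hadj, hlt⟩ := hf u huw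
      obtain ⟨p, hp⟩ := ih (f v) (h ▸ hlt) v rfl
      exact ⟨.cons hadj p, by rw [Walk.length_cons]; omega⟩

theorem dist_eq_of_adj_le_succ_of_exists_adj_lt (f : V → ℕ) {w : V} (hw : f w = 0)
    (hle : ∀ u v, G.Adj u v → f u ≤ f v + 1) (hlt : ∀ u, u ≠ w → ∃ v, G.Adj u v ∧ f v < f u)
    (u : V) : G.dist u w = f u := by
  obtain ⟨p, hp⟩ := exists_walk_length_le_of_exists_adj_lt f hlt u
  obtain ⟨q, hq⟩ := (Walk.reachable p).exists_walk_length_eq_dist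
  have := le_add_length_of_adj_le_succ f hle q
  have := G.dist_le p
  omega

end SimpleGraph

theorem metricDim_le_card {V : Type*} {G : SimpleGraph V} {S : Finset V}
    (hS : resolvingSet G ↑S) : metricDim G ≤ S.card :=
  Nat.sInf_le ⟨S, hS, rfl⟩

namespace johnsonGraph

open Finset

variable {n k : ℕ}

theorem card_sdiff_le_of_adj {U V : {s : Finset (Fin n) // s.card = k}}
    (h : (johnsonGraph n k).Adj U V) (W : Finset (Fin n)) :
    #(U.1 \ W) ≤ #(V.1 \ W) + 1 := by
  have hUV : #(U.1 \ V.1) ≤ 1 := by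
    rw [card_sdiff, inter_comm, h.2, U.2]
    omega
  calc #(U.1 \ W) ≤ #(U.1 \ V.1 ∪ V.1 \ W) := card_le_card (sdiff_triangle _ _ _)
    _ ≤ #(U.1 \ V.1) + #(V.1 \ W) := card_union_le _ _
    _ ≤ #(V.1 \ W) + 1 := by omega

-- Exchange an element of `U \ W` for one of `W \ U`.
theorem exists_adj_card_sdiff_lt {U W : {s : Finset (Fin n) // s.card = k}} (h : U ≠ W) :
    ∃ V, (johnsonGraph n k).Adj U V ∧ #(V.1 \ W.1) < #(U.1 \ W.1) := by
  have hUW : U.1 ≠ W.1 := fun e => h (Subtype.ext e)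
  obtain ⟨a, ha⟩ : (U.1 \ W.1).Nonempty :=
    sdiff_nonempty.2 fun hs => hUW (eq_of_subset_of_card_le hs (by rw [U.2, W.2]))
  obtain ⟨b, hb⟩ : (W.1 \ U.1).Nonempty :=
    sdiff_nonempty.2 fun hs => hUW (eq_of_subset_of_card_le hs (by rw [U.2, W.2])).symm
  rw [mem_sdiff] at ha hb
  have hbU : b ∉ U.1.erase a := fun hb' => hb.2 (mem_of_mem_erase hb')
  have hcard : #(insert b (U.1.erase a)) = k := by
    rw [card_insert_of_notMem hbU, card_erase_add_one ha.1, U.2]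
  refine ⟨⟨_, hcard⟩, ⟨fun e => hb.2 ?_, ?_⟩, ?_⟩
  · rw [e]
    exact mem_insert_self _ _
  · rw [inter_insert_of_notMem hb.2, inter_eq_right.2 (erase_subset _ _),
      card_erase_of_mem ha.1, U.2]
  · have : insert b (U.1.erase a) \ W.1 = (U.1 \ W.1).erase a := by
      rw [insert_sdiff_of_mem _ hb.1, erase_sdiff_comm]
    rw [this]
    exact card_erase_lt_of_mem (mem_sdiff.2 ha)

theorem dist_eq (U W : {s : Finset (Fin n) // s.card = k}) :
    (johnsonGraph n k).dist U W = k - #(U.1 ∩ W.1) := by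
  rw [SimpleGraph.dist_eq_of_adj_le_succ_of_exists_adj_lt (fun V => #(V.1 \ W.1)) (by simp)
    (fun _ _ h => card_sdiff_le_of_adj h _) (fun _ h => exists_adj_card_sdiff_lt h),
    card_sdiff, inter_comm, U.2]

theorem resolvingSet_of_card_inter_injective (S : Set {s : Finset (Fin n) // s.card = k})
    (hS : ∀ U W : {s : Finset (Fin n) // s.card = k},
      (∀ X ∈ S, #(U.1 ∩ X.1) = #(W.1 ∩ X.1)) → U = W) :
    resolvingSet (johnsonGraph n k) S := by
  intro U W hUW
  by_contra! h
  refine hUW (hS U W fun X hX => ?_)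
  have hd := h X hX
  rw [dist_eq, dist_eq] at hd
  have hU := (card_le_card (inter_subset_left (s₁ := U.1) (s₂ := X.1))).trans_eq U.2
  have hW := (card_le_card (inter_subset_left (s₁ := W.1) (s₂ := X.1))).trans_eq W.2
  omega

end johnsonGraph

section Probe

open Finset

variable {α : Type*} [DecidableEq α] {T Z : Finset α}

def probe (T Z : Finset α) (i : α) : Finset α :=
  if i ∈ T then Z ∪ T.erase i else insert i T

theorem card_probe_of_notMem {i : α} (hi : i ∉ T) : #(probe T Z i) = #T + 1 := by
  rw [probe, if_neg hi, card_insert_of_notMem hi]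

theorem card_probe_of_mem (hZT : Disjoint Z T) {t : α} (ht : t ∈ T) :
    #(probe T Z t) + 1 = #Z + #T := by
  rw [probe, if_pos ht, card_union_of_disjoint (hZT.mono_right (erase_subset _ _)), add_assoc,
    card_erase_add_one ht]

theorem card_inter_probe_of_notMem {i : α} (hi : i ∉ T) (U : Finset α) :
    #(U ∩ probe T Z i) = #(U ∩ T) + if i ∈ U then 1 else 0 := by
  rw [probe, if_neg hi]
  split_ifs with hiU
  · rw [inter_insert_of_mem hiU, card_insert_of_notMem fun h => hi (mem_inter.1 h).2]
  · rw [inter_insert_of_notMem hiU, add_zero]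

theorem card_inter_probe_of_mem (hZT : Disjoint Z T) {t : α} (ht : t ∈ T) (U : Finset α) :
    #(U ∩ probe T Z t) + (if t ∈ U then 1 else 0) = #(U ∩ Z) + #(U ∩ T) := by
  have hdisj : Disjoint (U ∩ Z) (U ∩ T.erase t) :=
    (hZT.mono inter_subset_right inter_subset_right).mono_right
      (inter_subset_inter_left (erase_subset _ _))
  rw [probe, if_pos ht, inter_union_distrib_left, card_union_of_disjoint hdisj, inter_erase,
    add_assoc]
  split_ifs with htU
  · rw [card_erase_add_one (mem_inter.2 ⟨htU, ht⟩)]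
  · rw [erase_eq_of_notMem fun h => htU (mem_inter.1 h).1, add_zero]

theorem subset_of_card_inter_lt_of_card_inter_probe_eq {U V : Finset α}
    (hlt : #(U ∩ T) < #(V ∩ T)) (h : ∀ i, #(U ∩ probe T Z i) = #(V ∩ probe T Z i)) : V ⊆ T := by
  intro x hxV
  by_contra hxT
  have hx := h x
  rw [card_inter_probe_of_notMem hxT, card_inter_probe_of_notMem hxT, if_pos hxV] at hx
  split_ifs at hx <;> omega

theorem eq_of_card_inter_probe_eq (hZT : Disjoint Z T) {U V : Finset α} (hU : #T < #U)
    (hV : #T < #V) (h : ∀ i, #(U ∩ probe T Z i) = #(V ∩ probe T Z i)) : U = V := by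
  have hUT : #(U ∩ T) = #(V ∩ T) := by
    by_contra hne
    rcases lt_or_gt_of_ne hne with hlt | hlt
    · exact hV.not_ge (card_le_card (subset_of_card_inter_lt_of_card_inter_probe_eq hlt h))
    · exact hU.not_ge
        (card_le_card (subset_of_card_inter_lt_of_card_inter_probe_eq hlt fun i => (h i).symm))
  have hout : ∀ x ∉ T, (x ∈ U ↔ x ∈ V) := by
    intro x hxT
    have hx := h x
    rw [card_inter_probe_of_notMem hxT, card_inter_probe_of_notMem hxT, hUT, add_right_inj] at hx
    split_ifs at hx <;> simp_all
  have hUZ : U ∩ Z = V ∩ Z := by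
    ext x
    simp only [mem_inter, and_congr_left_iff]
    exact fun hxZ => hout x (disjoint_left.1 hZT hxZ)
  ext x
  by_cases hxT : x ∈ T
  · have hx := card_inter_probe_of_mem hZT hxT U
    rw [h x, hUZ, hUT, ← card_inter_probe_of_mem hZT hxT V, add_right_inj] at hx
    split_ifs at hx <;> simp_all
  · exact hout x hxT

end Probe

open Finset in
/-- For `1 ≤ k < n`, the metric dimension of the Johnson graph `J(n,k)` is at most `n`. -/
theorem johnson_metricDim_le_n (n k : ℕ) (hk : 1 ≤ k) (hkn : k < n) :
    metricDim (johnsonGraph n k) ≤ n := by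
  obtain ⟨T, -, hT⟩ := exists_subset_card_eq (s := (univ : Finset (Fin n))) (n := k - 1)
    (by rw [card_univ, Fintype.card_fin]; omega)
  obtain ⟨Z, hZT, hZ⟩ := exists_subset_card_eq (s := Tᶜ) (n := 2)
    (by rw [card_compl, hT, Fintype.card_fin]; omega)
  have hZT : Disjoint Z T := subset_compl_iff_disjoint_right.1 hZT
  have hcard (i : Fin n) : #(probe T Z i) = k := by
    by_cases hi : i ∈ T
    · have := card_probe_of_mem hZT hi; omega
    · have := card_probe_of_notMem (Z := Z) hi; omega
  let probeVertex (i : Fin n) : {s : Finset (Fin n) // s.card = k} := ⟨probe T Z i, hcard i⟩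
  have hres : resolvingSet (johnsonGraph n k) ↑(univ.image probeVertex) := by
    refine johnsonGraph.resolvingSet_of_card_inter_injective _ fun U W h => Subtype.ext ?_
    refine eq_of_card_inter_probe_eq hZT (by rw [hT, U.2]; omega) (by rw [hT, W.2]; omega)
      fun i => h (probeVertex i) (by simp)
  calc metricDim (johnsonGraph n k) ≤ #(univ.image probeVertex) := metricDim_le_card hres
    _ ≤ n := card_image_le.trans_eq (card_fin n)
end

section
/- Let n, k, λ be integers with 2 ≤ k < n, and let D be a symmetric 2-design with parameters (n,k,λ), i.e., a family of exactly n blocks, each a k-element subset of an n-element point set {1,...,n}, such that every pair of distinct points is contained in exactly λ blocks. Then the set of blocks of D is a resolving set for the Johnson graph J(n,k). -/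
/-! If two `k`-sets `U ≠ V` had the same distances to all blocks, then, since the distance in
`J(n,k)` is `#(X \ W)`, they would meet every block in equally many points, and so would
`U \ V` and `V \ U`. Counting, for a point `p ∈ U \ V`, incidences with the blocks through `p`
gives `r = λ` for the replication number `r` of `p`, while `r (k - 1) = (n - 1) λ` and `λ > 0`
force `k = n`. -/

open Finset

section Johnson

variable {n k : ℕ}

lemma johnsonGraph_eq_of_card_sdiff_eq_zero {X W : {s : Finset (Fin n) // s.card = k}}
    (h : #(X.1 \ W.1) = 0) : X = W :=
  Subtype.ext <| eq_of_subset_of_card_le (sdiff_eq_empty_iff_subset.mp (card_eq_zero.mp h))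
    (by rw [X.2, W.2])

lemma johnsonGraph_card_sdiff_eq_one_of_adj {X Y : {s : Finset (Fin n) // s.card = k}}
    (h : (johnsonGraph n k).Adj X Y) : #(X.1 \ Y.1) = 1 := by
  have hsplit := card_sdiff_add_card_inter X.1 Y.1
  have hne : #(X.1 \ Y.1) ≠ 0 := fun h0 => h.1 (johnsonGraph_eq_of_card_sdiff_eq_zero h0)
  rw [h.2, X.2] at hsplit
  omega

lemma johnsonGraph_card_sdiff_le_length {X W : {s : Finset (Fin n) // s.card = k}}
    (p : (johnsonGraph n k).Walk X W) : #(X.1 \ W.1) ≤ p.length := by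
  induction p with
  | nil => simp
  | @cons X Y W hadj q ih =>
    calc #(X.1 \ W.1) ≤ #(X.1 \ Y.1 ∪ Y.1 \ W.1) := card_le_card (sdiff_triangle _ _ _)
      _ ≤ #(X.1 \ Y.1) + #(Y.1 \ W.1) := card_union_le _ _
      _ ≤ (q.cons hadj).length := by
        rw [johnsonGraph_card_sdiff_eq_one_of_adj hadj, SimpleGraph.Walk.length_cons]
        omega

/-- Exchanging a point of `X \ W` for a point of `W \ X` moves one step closer to `W`. -/
lemma johnsonGraph_exists_adj_card_sdiff {X W : {s : Finset (Fin n) // s.card = k}}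
    (hXW : X ≠ W) :
    ∃ Y, (johnsonGraph n k).Adj X Y ∧ #(Y.1 \ W.1) + 1 = #(X.1 \ W.1) := by
  have hsymm : #(W.1 \ X.1) = #(X.1 \ W.1) := card_sdiff_comm (W.2.trans X.2.symm)
  obtain ⟨a, ha⟩ : (X.1 \ W.1).Nonempty :=
    card_pos.mp (Nat.pos_of_ne_zero fun h => hXW (johnsonGraph_eq_of_card_sdiff_eq_zero h))
  obtain ⟨b, hb⟩ : (W.1 \ X.1).Nonempty := card_pos.mp (hsymm ▸ card_pos.mpr ⟨a, ha⟩)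
  rw [mem_sdiff] at ha hb
  have hbX : b ∉ X.1.erase a := fun h => hb.2 (mem_of_mem_erase h)
  have hYcard : #(insert b (X.1.erase a)) = k := by
    rw [card_insert_of_notMem hbX, card_erase_of_mem ha.1, X.2]
    have : 0 < k := X.2 ▸ card_pos.mpr ⟨a, ha.1⟩
    omega
  have hXY : X.1 ∩ insert b (X.1.erase a) = X.1.erase a := by
    ext x; simp only [mem_inter, mem_insert, mem_erase]; grind
  have hYW : insert b (X.1.erase a) \ W.1 = (X.1 \ W.1).erase a := by
    ext x; simp only [mem_sdiff, mem_insert, mem_erase]; grind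
  have haY : a ∉ insert b (X.1.erase a) := by simp only [mem_insert, mem_erase]; grind
  refine ⟨⟨_, hYcard⟩, ⟨ne_of_apply_ne Subtype.val (ne_of_mem_of_not_mem' ha.1 haY), ?_⟩, ?_⟩
  · rw [hXY, card_erase_of_mem ha.1, X.2]
  · rw [hYW, card_erase_add_one (mem_sdiff.mpr ha)]

lemma johnsonGraph_exists_walk_length_eq_card_sdiff (X W : {s : Finset (Fin n) // s.card = k}) :
    ∃ p : (johnsonGraph n k).Walk X W, p.length = #(X.1 \ W.1) := by
  induction hd : #(X.1 \ W.1) generalizing X with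
  | zero =>
    obtain rfl := johnsonGraph_eq_of_card_sdiff_eq_zero hd
    exact ⟨.nil, rfl⟩
  | succ d ih =>
    have hXW : X ≠ W := by rintro rfl; simp at hd
    obtain ⟨Y, hadj, hY⟩ := johnsonGraph_exists_adj_card_sdiff hXW
    obtain ⟨q, hq⟩ := ih Y (by omega)
    exact ⟨q.cons hadj, by rw [SimpleGraph.Walk.length_cons, hq]⟩

lemma johnsonGraph_dist_s10 (X W : {s : Finset (Fin n) // s.card = k}) :
    (johnsonGraph n k).dist X W = #(X.1 \ W.1) := by
  obtain ⟨p, hp⟩ := johnsonGraph_exists_walk_length_eq_card_sdiff X W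
  obtain ⟨q, hq⟩ := SimpleGraph.Reachable.exists_walk_length_eq_dist ⟨p⟩
  exact le_antisymm (hp ▸ SimpleGraph.dist_le p) (hq ▸ johnsonGraph_card_sdiff_le_length q)

end Johnson

section Design

variable {α ι : Type*} [DecidableEq α] (B : ι → Finset α)

lemma sum_card_inter_eq_sum_card_filter_mem (R : Finset ι) (S : Finset α) :
    ∑ i ∈ R, #(S ∩ B i) = ∑ q ∈ S, #{i ∈ R | q ∈ B i} := by
  simp_rw [← filter_mem_eq_inter, card_eq_sum_ones, sum_filter]
  exact sum_comm

variable [Fintype ι] {B} {lam : ℕ}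
  (hpair : ∀ p q, p ≠ q → #{i | p ∈ B i ∧ q ∈ B i} = lam)
include hpair

lemma sum_card_inter_of_notMem {p : α} {S : Finset α} (hp : p ∉ S) :
    ∑ i with p ∈ B i, #(S ∩ B i) = #S * lam := by
  rw [sum_card_inter_eq_sum_card_filter_mem, sum_const_nat]
  intro q hq
  rw [filter_filter]
  exact hpair p q (ne_of_mem_of_not_mem hq hp).symm

lemma sum_card_inter_of_mem {p : α} {S : Finset α} (hp : p ∈ S) :
    ∑ i with p ∈ B i, #(S ∩ B i) = #{i | p ∈ B i} + #(S.erase p) * lam := by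
  rw [sum_card_inter_eq_sum_card_filter_mem, ← add_sum_erase _ _ hp, filter_filter,
    sum_const_nat (m := lam)]
  · simp only [and_self]
  · intro q hq
    rw [filter_filter]
    exact hpair p q (ne_of_mem_erase hq).symm

lemma card_filter_mem_mul_eq [Fintype α] {k : ℕ} (hcard : ∀ i, #(B i) = k) (p : α) :
    #{i | p ∈ B i} * (k - 1) = (Fintype.card α - 1) * lam := by
  rw [← card_univ, ← card_erase_of_mem (mem_univ p),
    ← sum_card_inter_of_notMem hpair (notMem_erase p univ), ← sum_const_nat]
  intro i hi
  rw [erase_inter, univ_inter, card_erase_of_mem (mem_filter.mp hi).2, hcard]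

lemma card_filter_mem_eq_of_card_inter_eq {p : α} {A C : Finset α} (hpA : p ∈ A) (hpC : p ∉ C)
    (hAC : #A = #C) (h : ∀ i, #(A ∩ B i) = #(C ∩ B i)) :
    #{i | p ∈ B i} = lam := by
  have hsum := sum_congr rfl fun i (_ : i ∈ ({i | p ∈ B i} : Finset ι)) => h i
  rw [sum_card_inter_of_mem hpair hpA, sum_card_inter_of_notMem hpair hpC, ← hAC,
    ← card_erase_add_one hpA, add_one_mul] at hsum
  linarith

lemma lam_pos {k : ℕ} (hk : 2 ≤ k) (hcard : ∀ i, #(B i) = k) (i : ι) : 0 < lam := by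
  obtain ⟨p, hp, q, hq, hpq⟩ := one_lt_card.mp (show 1 < #(B i) by rw [hcard]; omega)
  exact hpair p q hpq ▸ card_pos.mpr ⟨i, mem_filter.mpr ⟨mem_univ i, hp, hq⟩⟩

lemma eq_of_card_inter_blocks_eq [Fintype α] [Nonempty ι] {k : ℕ} (hk : 2 ≤ k)
    (hkα : k < Fintype.card α) (hcard : ∀ i, #(B i) = k) {U V : Finset α} (hUV : #U = #V)
    (h : ∀ i, #(U ∩ B i) = #(V ∩ B i)) : U = V := by
  by_contra hne
  obtain ⟨p, hp⟩ : (U \ V).Nonempty := by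
    rw [nonempty_iff_ne_empty, Ne, sdiff_eq_empty_iff_subset]
    exact fun hsub => hne (eq_of_subset_of_card_le hsub hUV.ge)
  have hdiff (i : ι) : #((U \ V) ∩ B i) = #((V \ U) ∩ B i) := by
    have hdistrib (X Y : Finset α) : (X \ Y) ∩ B i = (X ∩ B i) \ (Y ∩ B i) := by
      ext x; simp only [mem_inter, mem_sdiff]; tauto
    rw [hdistrib, hdistrib, card_sdiff_comm (h i)]
  have hpVU : p ∉ V \ U := fun h => (mem_sdiff.mp hp).2 (mem_sdiff.mp h).1
  have hr := card_filter_mem_eq_of_card_inter_eq hpair hp hpVU (card_sdiff_comm hUV) hdiff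
  have hcount := card_filter_mem_mul_eq hpair hcard p
  rw [hr, mul_comm] at hcount
  have := Nat.eq_of_mul_eq_mul_right (lam_pos hpair hk hcard (Classical.arbitrary ι)) hcount
  omega

end Design

/-- The blocks of a symmetric `(n,k,λ)` design (exactly `n` blocks, each a `k`-subset
of the `n` points, every pair of distinct points in exactly `λ` blocks) form a
resolving set for the Johnson graph `J(n,k)`. -/
theorem symmetric_design_resolving_johnson (n k lam : ℕ) (hk : 2 ≤ k) (hkn : k < n)
    (B : Fin n → Finset (Fin n))
    (hcard : ∀ i, (B i).card = k)
    (hpair : ∀ p q : Fin n, p ≠ q →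
      (Finset.univ.filter (fun i => p ∈ B i ∧ q ∈ B i)).card = lam) :
    resolvingSet (johnsonGraph n k) {X | ∃ i, X.1 = B i} := by
  intro U V hUV
  by_contra! hdist
  have : Nonempty (Fin n) := ⟨⟨0, by omega⟩⟩
  refine hUV <| Subtype.ext <| eq_of_card_inter_blocks_eq hpair hk (by simpa using hkn) hcard
    (U.2.trans V.2.symm) fun i => ?_
  have hi : #(U.1 \ B i) = #(V.1 \ B i) := by
    simpa only [johnsonGraph_dist_s10] using hdist ⟨B i, hcard i⟩ ⟨i, rfl⟩
  have hU := card_sdiff_add_card_inter U.1 (B i)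
  have hV := card_sdiff_add_card_inter V.1 (B i)
  rw [U.2] at hU
  rw [V.2] at hV
  omega
end

section
/- Let a, b ≥ 13 be integers and n = ab. Identify the n-element set with V = (ℤ/aℤ) × (ℤ/bℤ). Then the collection of all straight paths with 5 vertices in the toroidal grid C_a □ C_b — i.e., all sets of the form {(x+i, y) : i = 0,...,4} or {(x, y+j) : j = 0,...,4} for (x,y) ∈ V — is a resolving set for the Kneser graph K(n,5) on the ground set V. Consequently β(K(n,5)) ≤ 2n for such n. -/
/-- The Kneser graph `K(n,k)` on a ground set `X`: vertices are the `k`-element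
subsets of `X`, two vertices adjacent iff the corresponding subsets are disjoint. -/
def kneserGraphOn (X : Type*) [DecidableEq X] (k : ℕ) :
    SimpleGraph {s : Finset X // s.card = k} where
  Adj U W := U ≠ W ∧ Disjoint U.1 W.1
  symm := by
    constructor
    intro U W h
    exact ⟨h.1.symm, h.2.symm⟩
  loopless := by
    constructor
    intro U h
    exact h.1 rfl

/-!
Two vertices of `K(ab, 5)` are resolved by a path `P` as soon as `P` is disjoint from exactly one
of them: then one distance is `1` and the other is not. So it suffices that a `5`-subset of the
torus is determined by the set of straight paths avoiding it.

On a cycle `ℤ/m`, let `S` and `T` have the same free windows of length `ℓ`, and `x ∈ S \ T`. Then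
`S` meets `x + 1, …, x + ℓ`: otherwise this window avoids `T`, hence so does the window starting
at `x`, which therefore avoids `S` although it contains `x`. Likewise `S` meets `x - ℓ, …, x - 1`,
and for `2ℓ < m` the two points found are distinct. In the torus, a point `p ∈ U \ W` thus has
two more points of `U` in its row and two in its column, so `U = {p} ∪ A` is a cross. Each point
of the arms `A` is alone in its line of `U`, hence lies in `W`, and `W = {q} ∪ A` with `q ∉ U`.
Applying the same argument to `q` puts two points of `A` in the row of `q` and two in its column,
which forces `q = p`.
-/

open Finset

theorem ZMod.natCast_ne_zero_of_lt {m n : ℕ} (h0 : 0 < n) (hn : n < m) : (n : ZMod m) ≠ 0 := by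
  rw [Ne, ZMod.natCast_eq_zero_iff]
  exact fun hdvd => (Nat.le_of_dvd h0 hdvd).not_gt hn

theorem ZMod.add_natCast_fin_injective {m ℓ : ℕ} (hℓ : ℓ ≤ m) (x : ZMod m) :
    Function.Injective fun i : Fin ℓ => x + ((i : ℕ) : ZMod m) := by
  intro i j hij
  have h := congrArg ZMod.val (add_left_cancel hij)
  rwa [ZMod.val_cast_of_lt (by omega), ZMod.val_cast_of_lt (by omega), ← Fin.ext_iff] at h

def SameFreeWindows {m : ℕ} (ℓ : ℕ) (S T : Set (ZMod m)) : Prop :=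
  ∀ s : ZMod m, (∀ i < ℓ, s + (i : ZMod m) ∉ S) ↔ (∀ i < ℓ, s + (i : ZMod m) ∉ T)

section Cycle

variable {m ℓ : ℕ} {S T : Set (ZMod m)} {x : ZMod m}

theorem SameFreeWindows.exists_add_mem (h : SameFreeWindows ℓ S T) (hℓ : 0 < ℓ)
    (hxS : x ∈ S) (hxT : x ∉ T) : ∃ i, 0 < i ∧ i ≤ ℓ ∧ x + (i : ZMod m) ∈ S := by
  by_contra! hgap
  have hshift (i : ℕ) : x + 1 + (i : ZMod m) = x + ((i + 1 : ℕ) : ZMod m) := by push_cast; ring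
  have hfreeS : ∀ i < ℓ, x + 1 + (i : ZMod m) ∉ S := fun i hi => by
    rw [hshift]; exact hgap _ (by omega) (by omega)
  have hfreeT : ∀ i < ℓ, x + (i : ZMod m) ∉ T := by
    rintro (_ | i) hi
    · simpa using hxT
    · rw [← hshift]; exact (h _).1 hfreeS i (by omega)
  exact (h x).2 hfreeT 0 hℓ (by simpa using hxS)

theorem SameFreeWindows.exists_sub_mem (h : SameFreeWindows ℓ S T) (hℓ : 0 < ℓ)
    (hxS : x ∈ S) (hxT : x ∉ T) : ∃ i, 0 < i ∧ i ≤ ℓ ∧ x - (i : ZMod m) ∈ S := by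
  by_contra! hgap
  have hfreeS : ∀ i < ℓ, x - ℓ + (i : ZMod m) ∉ S := fun i hi => by
    have e : x - ℓ + (i : ZMod m) = x - ((ℓ - i : ℕ) : ZMod m) := by
      push_cast [Nat.cast_sub hi.le]; ring
    rw [e]; exact hgap _ (by omega) (by omega)
  have hlast : x - ℓ + 1 + ((ℓ - 1 : ℕ) : ZMod m) = x := by
    push_cast [Nat.cast_sub (Nat.one_le_iff_ne_zero.2 hℓ.ne')]; ring
  have hfreeT : ∀ i < ℓ, x - ℓ + 1 + (i : ZMod m) ∉ T := by
    intro i hi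
    rcases (Nat.le_sub_one_of_lt hi).lt_or_eq with hi' | rfl
    · have e : x - ℓ + 1 + (i : ZMod m) = x - ℓ + ((i + 1 : ℕ) : ZMod m) := by push_cast; ring
      rw [e]; exact (h _).1 hfreeS _ (by omega)
    · rwa [hlast]
  exact (h _).2 hfreeT (ℓ - 1) (by omega) (by rwa [hlast])

theorem SameFreeWindows.exists_two_mem_ne (h : SameFreeWindows ℓ S T) (hℓ : 0 < ℓ)
    (hm : 2 * ℓ < m) (hxS : x ∈ S) (hxT : x ∉ T) :
    ∃ y z, y ∈ S ∧ z ∈ S ∧ y ≠ z ∧ y ≠ x ∧ z ≠ x := by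
  obtain ⟨i, hi0, hiℓ, hiS⟩ := h.exists_add_mem hℓ hxS hxT
  obtain ⟨j, hj0, hjℓ, hjS⟩ := h.exists_sub_mem hℓ hxS hxT
  refine ⟨_, _, hiS, hjS, fun e => ?_, fun e => ?_, fun e => ?_⟩
  · exact ZMod.natCast_ne_zero_of_lt (m := m) (n := i + j) (by omega) (by omega)
      (by push_cast; linear_combination e)
  · exact ZMod.natCast_ne_zero_of_lt (m := m) hi0 (by omega) (by linear_combination e)
  · exact ZMod.natCast_ne_zero_of_lt (m := m) hj0 (by omega) (by linear_combination -e)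

theorem SameFreeWindows.mem_of_eq_singleton (h : SameFreeWindows ℓ S T) (hℓ : 0 < ℓ)
    (hm : 2 * ℓ < m) (hS : S = {x}) : x ∈ T := by
  by_contra hxT
  obtain ⟨y, z, hy, hz, hyz, -⟩ := h.exists_two_mem_ne hℓ hm (hS ▸ rfl) hxT
  rw [hS] at hy hz
  exact hyz (hy.trans hz.symm)

end Cycle

section Cross

variable {α β : Type*} [DecidableEq α] [DecidableEq β]

def crossArms (p : α × β) (r₁ r₂ : α) (c₁ c₂ : β) : Finset (α × β) :=
  {(r₁, p.2), (r₂, p.2), (p.1, c₁), (p.1, c₂)}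

variable {p : α × β} {r₁ r₂ x x' : α} {c₁ c₂ y y' : β}

theorem snd_eq_of_mem_crossArms (hx : x ≠ x') (h : (x, y) ∈ crossArms p r₁ r₂ c₁ c₂)
    (h' : (x', y) ∈ crossArms p r₁ r₂ c₁ c₂) : y = p.2 := by
  simp only [crossArms, mem_insert, mem_singleton, Prod.mk.injEq] at h h'
  grind

theorem fst_eq_of_mem_crossArms (hy : y ≠ y') (h : (x, y) ∈ crossArms p r₁ r₂ c₁ c₂)
    (h' : (x, y') ∈ crossArms p r₁ r₂ c₁ c₂) : x = p.1 := by
  simp only [crossArms, mem_insert, mem_singleton, Prod.mk.injEq] at h h'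
  grind

end Cross

section Torus

variable {a b ℓ : ℕ}

def horizontalPath (ℓ : ℕ) (x : ZMod a) (y : ZMod b) : Finset (ZMod a × ZMod b) :=
  univ.image fun i : Fin ℓ => (x + (i : ℕ), y)

def verticalPath (ℓ : ℕ) (x : ZMod a) (y : ZMod b) : Finset (ZMod a × ZMod b) :=
  univ.image fun j : Fin ℓ => (x, y + (j : ℕ))

def straightPaths (a b ℓ : ℕ) : Set (Finset (ZMod a × ZMod b)) :=
  {P | ∃ x y, P = horizontalPath ℓ x y ∨ P = verticalPath ℓ x y}

theorem card_of_mem_straightPaths (ha : ℓ ≤ a) (hb : ℓ ≤ b) {P : Finset (ZMod a × ZMod b)}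
    (hP : P ∈ straightPaths a b ℓ) : P.card = ℓ := by
  obtain ⟨x, y, rfl | rfl⟩ := hP
  · rw [horizontalPath, card_image_of_injective _ fun i j h =>
      ZMod.add_natCast_fin_injective ha x (Prod.ext_iff.1 h).1, card_univ, Fintype.card_fin]
  · rw [verticalPath, card_image_of_injective _ fun i j h =>
      ZMod.add_natCast_fin_injective hb y (Prod.ext_iff.1 h).2, card_univ, Fintype.card_fin]

theorem ncard_straightPaths_le [NeZero a] [NeZero b] :
    (straightPaths a b ℓ).ncard ≤ 2 * (a * b) := by
  have hsub : straightPaths a b ℓ ⊆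
      (Set.range fun z : ZMod a × ZMod b => horizontalPath ℓ z.1 z.2) ∪
        Set.range fun z : ZMod a × ZMod b => verticalPath ℓ z.1 z.2 := by
    rintro P ⟨x, y, rfl | rfl⟩
    exacts [Or.inl ⟨(x, y), rfl⟩, Or.inr ⟨(x, y), rfl⟩]
  have hrange (f : ZMod a × ZMod b → Finset (ZMod a × ZMod b)) : (Set.range f).ncard ≤ a * b := by
    rw [← Set.image_univ]
    refine (Set.ncard_image_le (Set.toFinite _)).trans ?_
    rw [Set.ncard_univ, Nat.card_prod, Nat.card_zmod, Nat.card_zmod]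
  calc (straightPaths a b ℓ).ncard ≤ _ := Set.ncard_le_ncard hsub (Set.toFinite _)
    _ ≤ _ := Set.ncard_union_le _ _
    _ ≤ a * b + a * b := add_le_add (hrange _) (hrange _)
    _ = 2 * (a * b) := (two_mul _).symm

variable {U W : Finset (ZMod a × ZMod b)}

theorem disjoint_horizontalPath_iff {x : ZMod a} {y : ZMod b} :
    Disjoint U (horizontalPath ℓ x y) ↔ ∀ i < ℓ, (x + (i : ZMod a), y) ∉ U := by
  simp [horizontalPath, disjoint_right, Fin.forall_iff]

theorem disjoint_verticalPath_iff {x : ZMod a} {y : ZMod b} :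
    Disjoint U (verticalPath ℓ x y) ↔ ∀ j < ℓ, (x, y + (j : ZMod b)) ∉ U := by
  simp [verticalPath, disjoint_right, Fin.forall_iff]

theorem sameFreeWindows_row (hUW : ∀ P ∈ straightPaths a b ℓ, Disjoint U P ↔ Disjoint W P)
    (y : ZMod b) :
    SameFreeWindows ℓ {x | (x, y) ∈ U} {x | (x, y) ∈ W} := fun x =>
  disjoint_horizontalPath_iff.symm.trans
    ((hUW _ ⟨x, y, Or.inl rfl⟩).trans disjoint_horizontalPath_iff)

theorem sameFreeWindows_column (hUW : ∀ P ∈ straightPaths a b ℓ, Disjoint U P ↔ Disjoint W P)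
    (x : ZMod a) :
    SameFreeWindows ℓ {y | (x, y) ∈ U} {y | (x, y) ∈ W} := fun y =>
  disjoint_verticalPath_iff.symm.trans
    ((hUW _ ⟨x, y, Or.inr rfl⟩).trans disjoint_verticalPath_iff)

variable {p : ZMod a × ZMod b}

theorem exists_crossArms (hUW : ∀ P ∈ straightPaths a b ℓ, Disjoint U P ↔ Disjoint W P)
    (hℓ : 0 < ℓ) (ha : 2 * ℓ < a) (hb : 2 * ℓ < b) (hU : U.card = 5)
    (hpU : p ∈ U) (hpW : p ∉ W) :
    ∃ r₁ r₂ c₁ c₂, U = insert p (crossArms p r₁ r₂ c₁ c₂) ∧ crossArms p r₁ r₂ c₁ c₂ ⊆ W := by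
  obtain ⟨r₁, r₂, hr₁, hr₂, hr, hr₁p, hr₂p⟩ :=
    (sameFreeWindows_row hUW p.2).exists_two_mem_ne hℓ ha hpU hpW
  obtain ⟨c₁, c₂, hc₁, hc₂, hc, hc₁p, hc₂p⟩ :=
    (sameFreeWindows_column hUW p.1).exists_two_mem_ne hℓ hb hpU hpW
  have hUeq : U = insert p (crossArms p r₁ r₂ c₁ c₂) := by
    refine (eq_of_subset_of_card_le ?_ ?_).symm
    · simp only [crossArms, insert_subset_iff, singleton_subset_iff]
      exact ⟨hpU, hr₁, hr₂, hc₁, hc₂⟩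
    · rw [hU, crossArms, card_insert_of_notMem, card_insert_of_notMem, card_insert_of_notMem,
        card_insert_of_notMem, card_singleton] <;>
      simp [Prod.ext_iff, hr, hc, hr₁p, hr₂p, Ne.symm hr₁p, Ne.symm hr₂p, Ne.symm hc₁p,
        Ne.symm hc₂p]
  refine ⟨r₁, r₂, c₁, c₂, hUeq, ?_⟩
  have hcolumn (x : ZMod a) (y : ZMod b) (h : {y' | (x, y') ∈ U} = {y}) : (x, y) ∈ W :=
    (sameFreeWindows_column hUW x).mem_of_eq_singleton hℓ hb h
  have hrow (x : ZMod a) (y : ZMod b) (h : {x' | (x', y) ∈ U} = {x}) : (x, y) ∈ W :=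
    (sameFreeWindows_row hUW y).mem_of_eq_singleton hℓ ha h
  simp only [crossArms, insert_subset_iff, singleton_subset_iff]
  refine ⟨hcolumn _ _ ?_, hcolumn _ _ ?_, hrow _ _ ?_, hrow _ _ ?_⟩ <;> ext <;>
    simp [hUeq, crossArms, Prod.ext_iff, hr, hc, hr₁p, hr₂p, hc₁p, hc₂p, Ne.symm hr,
      Ne.symm hc]

theorem eq_of_forall_disjoint_straightPath_iff
    (hUW : ∀ P ∈ straightPaths a b ℓ, Disjoint U P ↔ Disjoint W P)
    (hℓ : 0 < ℓ) (ha : 2 * ℓ < a) (hb : 2 * ℓ < b) (hU : U.card = 5) (hW : W.card = 5) :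
    U = W := by
  by_contra hne
  obtain ⟨p, hpU, hpW⟩ := not_subset.1 fun h => hne (eq_of_subset_of_card_le h (by omega))
  obtain ⟨q, hqW, hqU⟩ := not_subset.1 fun h => hne (eq_of_subset_of_card_le h (by omega)).symm
  obtain ⟨r₁, r₂, c₁, c₂, hUeq, hAW⟩ := exists_crossArms hUW hℓ ha hb hU hpU hpW
  set A := crossArms p r₁ r₂ c₁ c₂
  have hpA : p ∉ A := fun h => hpW (hAW h)
  have hqA : q ∉ A := fun h => hqU (hUeq ▸ mem_insert_of_mem h)
  have hWeq : W = insert q A := (eq_of_subset_of_card_le (insert_subset hqW hAW) (by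
    rw [card_insert_of_notMem hqA, hW, ← hU, hUeq, card_insert_of_notMem hpA])).symm
  have hWU : ∀ P ∈ straightPaths a b ℓ, Disjoint W P ↔ Disjoint U P :=
    fun P hP => (hUW P hP).symm
  obtain ⟨s₁, s₂, hs₁, hs₂, hs, hs₁q, hs₂q⟩ :=
    (sameFreeWindows_row hWU q.2).exists_two_mem_ne hℓ ha hqW hqU
  obtain ⟨t₁, t₂, ht₁, ht₂, ht, ht₁q, ht₂q⟩ :=
    (sameFreeWindows_column hWU q.1).exists_two_mem_ne hℓ hb hqW hqU
  have hmem {z : ZMod a × ZMod b} (hz : z ∈ W) (hzq : z ≠ q) : z ∈ A :=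
    mem_of_mem_insert_of_ne (hWeq ▸ hz) hzq
  have hq₂ : q.2 = p.2 := snd_eq_of_mem_crossArms hs
    (hmem hs₁ fun h => hs₁q congr($h.1)) (hmem hs₂ fun h => hs₂q congr($h.1))
  have hq₁ : q.1 = p.1 := fst_eq_of_mem_crossArms ht
    (hmem ht₁ fun h => ht₁q congr($h.2)) (hmem ht₂ fun h => ht₂q congr($h.2))
  exact hpW (Prod.ext hq₁ hq₂ ▸ hqW)

end Torus

section Kneser

variable {X : Type*} [DecidableEq X] {k : ℕ}

theorem kneserGraphOn_dist_eq_one_iff (hk : 0 < k) {u v : {s : Finset X // s.card = k}} :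
    (kneserGraphOn X k).dist u v = 1 ↔ Disjoint u.1 v.1 := by
  rw [SimpleGraph.dist_eq_one_iff_adj]
  refine ⟨And.right, fun h => ⟨?_, h⟩⟩
  rintro rfl
  have := u.2
  rw [disjoint_self.1 h, bot_eq_empty, card_empty] at this
  omega

theorem resolvingSet_kneserGraphOn (hk : 0 < k) {S : Set {s : Finset X // s.card = k}}
    (hS : ∀ u v : {s : Finset X // s.card = k}, u ≠ v →
      ∃ P ∈ S, ¬(Disjoint u.1 P.1 ↔ Disjoint v.1 P.1)) :
    resolvingSet (kneserGraphOn X k) S := fun u v huv => by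
  obtain ⟨P, hP, h⟩ := hS u v huv
  refine ⟨P, hP, fun hd => h ?_⟩
  rw [← kneserGraphOn_dist_eq_one_iff hk, ← kneserGraphOn_dist_eq_one_iff hk, hd]

end Kneser

theorem metricDim_le_ncard {V : Type*} [Finite V] {G : SimpleGraph V} {S : Set V}
    (hS : resolvingSet G S) : metricDim G ≤ S.ncard :=
  Nat.sInf_le ⟨S.toFinite.toFinset, by rwa [Set.Finite.coe_toFinset],
    (Set.ncard_eq_toFinset_card S).symm⟩

theorem resolvingSet_kneserGraphOn_straightPaths {a b : ℕ} (ha : 11 ≤ a) (hb : 11 ≤ b) :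
    resolvingSet (kneserGraphOn (ZMod a × ZMod b) 5) {P | P.1 ∈ straightPaths a b 5} := by
  refine resolvingSet_kneserGraphOn (by norm_num) fun u v huv => ?_
  by_contra! h
  refine huv (Subtype.ext (eq_of_forall_disjoint_straightPath_iff (ℓ := 5) (fun P hP => ?_)
    (by norm_num) (by omega) (by omega) u.2 v.2))
  exact h ⟨P, card_of_mem_straightPaths (by omega) (by omega) hP⟩ hP

/-- For `a, b ≥ 13` and `n = ab`, the collection of all straight paths with 5
vertices in the toroidal grid `C_a □ C_b` is a resolving set for the Kneser graph
`K(n,5)` on the ground set `(ℤ/aℤ) × (ℤ/bℤ)`; consequently `β(K(n,5)) ≤ 2n`. -/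
theorem toroidal_grid_resolving_kneser_5 (a b : ℕ) (ha : 13 ≤ a) (hb : 13 ≤ b) :
    resolvingSet (kneserGraphOn (ZMod a × ZMod b) 5)
      {X | ∃ (x : ZMod a) (y : ZMod b),
        X.1 = Finset.image (fun i : Fin 5 => (x + (i : ℕ), y)) Finset.univ ∨
        X.1 = Finset.image (fun j : Fin 5 => (x, y + (j : ℕ))) Finset.univ} ∧
    metricDim (kneserGraphOn (ZMod a × ZMod b) 5) ≤ 2 * (a * b) := by
  have : NeZero a := ⟨by omega⟩
  have : NeZero b := ⟨by omega⟩
  have hres := resolvingSet_kneserGraphOn_straightPaths (a := a) (b := b) (by omega) (by omega)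
  refine ⟨hres, (metricDim_le_ncard hres).trans ?_⟩
  calc _ ≤ (straightPaths a b 5).ncard :=
        Set.ncard_le_ncard_of_injOn Subtype.val (fun P hP => hP) Subtype.val_injective.injOn
    _ ≤ 2 * (a * b) := ncard_straightPaths_le
end
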